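/- Let G be a finite cyclic group of order n ≥ 5 and H ≠ {e} a subgroup. Then the generalized non-coprime graph Γ_{G,H} is chordal if and only if either H is a p-group for some prime p, or (H = G and |G| has at most three distinct prime divisors). -/

import Mathlib

/-!
If `H` is a `p`-group, every edge of `Γ_{G,H}` joins two elements whose orders are divisible
by `p`; so among four consecutive vertices `a₀ a₁ a₂ a₃` of a cycle, whichever of `a₁`, `a₂` lies
in `H` is adjacent to `a₃`, resp. `a₀`. If `H = G`, a chordless path `a₀ a₁ a₂ a₃ a₄` (closed
when `a₄ = a₀`) gives primes `pᵢ ∣ gcd(|aᵢ|, |aᵢ₊₁|)`, pairwise distinct by coprimality of the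
orders of non-adjacent vertices, so `|G|` has at least four prime divisors.

Conversely, if `H = G` and `p, q, r, s` divide `|G|`, elements of orders `pq, qr, rs, sp` form an
induced `4`-cycle. If `H ≠ G` and two primes `p ≠ q` divide `|H|`, take `a, b ∈ H` of orders
`p, q` and a generator `g ∉ H` of `G`: then `a, g, b, g⁻¹` is an induced `4`-cycle.
-/

/-- The generalized non-coprime graph of a group `G` with respect to a subgroup `H`:
vertices are the non-identity elements of `G`, and distinct vertices `a`, `b` are
adjacent iff `gcd(|a|,|b|) ≠ 1` and `a ∈ H` or `b ∈ H`. -/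
def genNonCoprimeGraph (G : Type*) [Group G] (H : Subgroup G) :
    SimpleGraph {x : G // x ≠ 1} where
  Adj a b := a ≠ b ∧ Nat.gcd (orderOf (a : G)) (orderOf (b : G)) ≠ 1 ∧
    ((a : G) ∈ H ∨ (b : G) ∈ H)
  symm := by
    refine ⟨fun a b h => ?_⟩
    exact ⟨h.1.symm, by rw [Nat.gcd_comm]; exact h.2.1, h.2.2.symm⟩
  loopless := by
    refine ⟨fun a h => ?_⟩
    exact h.1 rfl

namespace SimpleGraph

variable {V : Type*} {Γ : SimpleGraph V}

def IsChordal (Γ : SimpleGraph V) : Prop :=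
  ∀ (v : V) (w : Γ.Walk v v), w.IsCycle → 4 ≤ w.length →
    ∃ x ∈ w.support, ∃ y ∈ w.support, Γ.Adj x y ∧ s(x, y) ∉ w.edges

theorem IsChordal.adj_or_adj_of_cycle {a b c d : V} (hΓ : Γ.IsChordal) (hab : Γ.Adj a b)
    (hbc : Γ.Adj b c) (hcd : Γ.Adj c d) (hda : Γ.Adj d a) (hac : a ≠ c) (hbd : b ≠ d) :
    Γ.Adj a c ∨ Γ.Adj b d := by
  let w : Γ.Walk a a := .cons hab (.cons hbc (.cons hcd (.cons hda .nil)))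
  have hw : w.IsCycle := by
    have := hab.ne; have := hbc.ne; have := hcd.ne; have := hda.ne
    simp only [w, Walk.cons_isCycle_iff, Walk.isPath_def, Walk.support_cons, Walk.support_nil,
      Walk.edges_cons, Walk.edges_nil, List.nodup_cons, List.mem_cons, Sym2.eq_iff]
    grind
  obtain ⟨x, hx, y, hy, hxy, hchord⟩ := hΓ a w hw (by simp [w])
  simp only [w, Walk.support_cons, Walk.support_nil, Walk.edges_cons, Walk.edges_nil,
    List.mem_cons, Sym2.eq_iff] at hx hy hchord
  have := hxy.symm
  have := hxy.ne
  grind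

/-- For a cycle of length `4` the hypothesis is used with `a₄ = a₀`. -/
theorem isChordal_of_forall_adj
    (hchord : ∀ a₀ a₁ a₂ a₃ a₄, Γ.Adj a₀ a₁ → Γ.Adj a₁ a₂ → Γ.Adj a₂ a₃ → Γ.Adj a₃ a₄ →
      a₀ ≠ a₂ → a₁ ≠ a₃ → a₂ ≠ a₄ → Γ.Adj a₀ a₂ ∨ Γ.Adj a₁ a₃ ∨ Γ.Adj a₂ a₄) :
    Γ.IsChordal := by
  intro v w hw hlen
  rcases w with _ | ⟨h₀₁, _ | ⟨h₁₂, _ | ⟨h₂₃, _ | ⟨h₃₄, q⟩⟩⟩⟩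
  iterate 4 · simp at hlen
  rename_i a₁ a₂ a₃ a₄
  rw [Walk.cons_isCycle_iff, Walk.isPath_def] at hw
  simp only [Walk.support_cons, List.nodup_cons, List.mem_cons, not_or] at hw
  obtain ⟨⟨⟨hne₁₂, h₁₃, h₁q⟩, ⟨hne₂₃, h₂q⟩, h₃q, -⟩, -⟩ := hw
  have hv : v ∈ q.support := q.end_mem_support
  have h₄ : a₄ ∈ q.support := q.start_mem_support
  have hq : ∀ x y, s(x, y) ∈ q.edges → x ∈ q.support ∧ y ∈ q.support := fun x y he =>
    ⟨q.fst_mem_support_of_mem_edges he, q.snd_mem_support_of_mem_edges he⟩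
  rcases hchord v a₁ a₂ a₃ a₄ h₀₁ h₁₂ h₂₃ h₃₄ (fun h => h₂q (h ▸ hv)) h₁₃
      (fun h => h₂q (h ▸ h₄)) with h | h | h <;>
    refine ⟨_, by simp, _, by simp, h, ?_⟩ <;> clear hchord <;>
    simp only [Walk.edges_cons, List.mem_cons, Sym2.eq_iff] <;> grind

end SimpleGraph

theorem Nat.four_le_card_primeFactors_of_not_coprime {n m₀ m₁ m₂ m₃ m₄ : ℕ} (hn : n ≠ 0)
    (hm₁ : m₁ ∣ n) (hm₂ : m₂ ∣ n) (hm₃ : m₃ ∣ n) (hm₄ : m₄ ∣ n)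
    (h₀₁ : ¬ Coprime m₀ m₁) (h₁₂ : ¬ Coprime m₁ m₂) (h₂₃ : ¬ Coprime m₂ m₃)
    (h₃₄ : ¬ Coprime m₃ m₄) (h₀₂ : Coprime m₀ m₂) (h₁₃ : Coprime m₁ m₃)
    (h₂₄ : Coprime m₂ m₄) : 4 ≤ n.primeFactors.card := by
  obtain ⟨p₀, hp₀, hp₀₀, hp₀₁⟩ := Prime.not_coprime_iff_dvd.mp h₀₁
  obtain ⟨p₁, hp₁, hp₁₁, hp₁₂⟩ := Prime.not_coprime_iff_dvd.mp h₁₂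
  obtain ⟨p₂, hp₂, hp₂₂, hp₂₃⟩ := Prime.not_coprime_iff_dvd.mp h₂₃
  obtain ⟨p₃, hp₃, hp₃₃, hp₃₄⟩ := Prime.not_coprime_iff_dvd.mp h₃₄
  have ne_of_coprime {a b p q : ℕ} (hab : Coprime a b) (hp : p.Prime) (hpa : p ∣ a)
      (hqb : q ∣ b) : p ≠ q := by
    rintro rfl
    exact Prime.not_coprime_iff_dvd.mpr ⟨p, hp, hpa, hqb⟩ hab
  have hsub : {p₀, p₁, p₂, p₃} ⊆ n.primeFactors := by
    simp only [Finset.insert_subset_iff, Finset.singleton_subset_iff, mem_primeFactors]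
    exact ⟨⟨hp₀, hp₀₁.trans hm₁, hn⟩, ⟨hp₁, hp₁₂.trans hm₂, hn⟩, ⟨hp₂, hp₂₃.trans hm₃, hn⟩,
      ⟨hp₃, hp₃₄.trans hm₄, hn⟩⟩
  calc 4 = ({p₀, p₁, p₂, p₃} : Finset ℕ).card :=
        (Finset.card_eq_four.mpr ⟨p₀, p₁, p₂, p₃, ne_of_coprime h₀₂ hp₀ hp₀₀ hp₁₂,
          ne_of_coprime h₁₃ hp₀ hp₀₁ hp₂₃, ne_of_coprime h₁₃ hp₀ hp₀₁ hp₃₃,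
          ne_of_coprime h₁₃ hp₁ hp₁₁ hp₂₃, ne_of_coprime h₁₃ hp₁ hp₁₁ hp₃₃,
          ne_of_coprime h₂₄ hp₂ hp₂₂ hp₃₄, rfl⟩).symm
    _ ≤ n.primeFactors.card := Finset.card_le_card hsub

theorem IsCyclic.exists_orderOf_eq_of_dvd {G : Type*} [Group G] [Finite G] [IsCyclic G] {d : ℕ}
    (hd : d ∣ Nat.card G) : ∃ x : G, orderOf x = d := by
  obtain ⟨g, hg⟩ := IsCyclic.exists_ofOrder_eq_natCard (α := G)
  exact ⟨g ^ (orderOf g / d), orderOf_pow_orderOf_div (orderOf_pos g).ne' (hg ▸ hd)⟩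

theorem exists_prime_ne_dvd_natCard_of_not_isPGroup {G : Type*} [Group G] [Finite G]
    (h : ∀ p, p.Prime → ¬ IsPGroup p G) :
    ∃ p q, p.Prime ∧ q.Prime ∧ p ≠ q ∧ p ∣ Nat.card G ∧ q ∣ Nat.card G := by
  have hG : Nat.card G ≠ 1 := fun h1 => h 2 Nat.prime_two (IsPGroup.of_card (n := 0) h1)
  obtain ⟨p, hp, hpG⟩ := Nat.exists_prime_and_dvd hG
  by_contra! hq
  exact h p hp (IsPGroup.of_card (Nat.eq_prime_pow_of_unique_prime_dvd Nat.card_pos.ne'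
    fun hq' hqG => of_not_not fun hqp => hq p _ hp hq' (Ne.symm hqp) hpG hqG))

open SimpleGraph

namespace genNonCoprimeGraph

variable {G : Type*} [Group G] {H : Subgroup G} {a b : {g : G // g ≠ 1}}

theorem adj_iff : (genNonCoprimeGraph G H).Adj a b ↔
    a ≠ b ∧ ¬ Nat.Coprime (orderOf (a : G)) (orderOf (b : G)) ∧ ((a : G) ∈ H ∨ (b : G) ∈ H) :=
  Iff.rfl

theorem top_adj_iff : (genNonCoprimeGraph G ⊤).Adj a b ↔
    a ≠ b ∧ ¬ Nat.Coprime (orderOf (a : G)) (orderOf (b : G)) := by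
  simp [adj_iff]

theorem adj_of_prime_dvd {p : ℕ} (hab : a ≠ b) (hmem : (a : G) ∈ H ∨ (b : G) ∈ H)
    (hp : p.Prime) (ha : p ∣ orderOf (a : G)) (hb : p ∣ orderOf (b : G)) :
    (genNonCoprimeGraph G H).Adj a b :=
  ⟨hab, Nat.Prime.not_coprime_iff_dvd.mpr ⟨p, hp, ha, hb⟩, hmem⟩

theorem prime_dvd_orderOf_of_adj {p : ℕ} (hp : p.Prime) (hH : IsPGroup p H)
    (h : (genNonCoprimeGraph G H).Adj a b) : p ∣ orderOf (a : G) := by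
  obtain ⟨k, hk, hka, hkb⟩ := Nat.Prime.not_coprime_iff_dvd.mp h.2.1
  have hkp : ∀ c : H, k ∣ orderOf (c : G) → k = p := fun c hc => by
    have := Fact.mk hp
    obtain ⟨j, hj⟩ := hH.exists_orderOf_eq_pow c
    rw [Subgroup.orderOf_coe, hj] at hc
    exact (Nat.prime_dvd_prime_iff_eq hk hp).mp (hk.dvd_of_dvd_pow hc)
  rcases h.2.2 with ha | hb
  · exact hkp ⟨_, ha⟩ hka ▸ hka
  · exact hkp ⟨_, hb⟩ hkb ▸ hka

theorem isChordal_of_isPGroup {p : ℕ} (hp : p.Prime) (hH : IsPGroup p H) :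
    (genNonCoprimeGraph G H).IsChordal := by
  refine isChordal_of_forall_adj fun a₀ a₁ a₂ a₃ _ h₀₁ h₁₂ h₂₃ _ h₀₂ h₁₃ _ => ?_
  have hdvd {x y} (h : (genNonCoprimeGraph G H).Adj x y) := prime_dvd_orderOf_of_adj hp hH h
  rcases h₁₂.2.2 with h₁ | h₂
  · exact Or.inr (Or.inl (adj_of_prime_dvd h₁₃ (Or.inl h₁) hp (hdvd h₁₂) (hdvd h₂₃.symm)))
  · exact Or.inl (adj_of_prime_dvd h₀₂ (Or.inr h₂) hp (hdvd h₀₁) (hdvd h₁₂.symm))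

theorem isChordal_top [Finite G] (hG : (Nat.card G).primeFactors.card ≤ 3) :
    (genNonCoprimeGraph G ⊤).IsChordal := by
  refine isChordal_of_forall_adj fun a₀ a₁ a₂ a₃ a₄ h₀₁ h₁₂ h₂₃ h₃₄ h₀₂ h₁₃ h₂₄ => ?_
  by_contra! hno
  have hcop {x y} (hxy : x ≠ y) (h : ¬ (genNonCoprimeGraph G ⊤).Adj x y) :
      Nat.Coprime (orderOf (x : G)) (orderOf (y : G)) := by
    simpa [top_adj_iff, hxy] using h
  have := Nat.four_le_card_primeFactors_of_not_coprime Nat.card_pos.ne'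
    (orderOf_dvd_natCard _) (orderOf_dvd_natCard _) (orderOf_dvd_natCard _)
    (orderOf_dvd_natCard _) h₀₁.2.1 h₁₂.2.1 h₂₃.2.1 h₃₄.2.1
    (hcop h₀₂ hno.1) (hcop h₁₃ hno.2.1) (hcop h₂₄ hno.2.2)
  omega

theorem not_isChordal_top_of_orderOf {x₁ x₂ x₃ x₄ : G}
    (h₁₂ : ¬ Nat.Coprime (orderOf x₁) (orderOf x₂)) (h₂₃ : ¬ Nat.Coprime (orderOf x₂) (orderOf x₃))
    (h₃₄ : ¬ Nat.Coprime (orderOf x₃) (orderOf x₄)) (h₄₁ : ¬ Nat.Coprime (orderOf x₄) (orderOf x₁))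
    (h₁₃ : Nat.Coprime (orderOf x₁) (orderOf x₃)) (h₂₄ : Nat.Coprime (orderOf x₂) (orderOf x₄)) :
    ¬ (genNonCoprimeGraph G ⊤).IsChordal := by
  have ne_one {x y : G} (h : ¬ Nat.Coprime (orderOf x) (orderOf y)) : x ≠ 1 := by
    rintro rfl
    simp at h
  let v₁ : {g : G // g ≠ 1} := ⟨x₁, ne_one h₁₂⟩
  let v₂ : {g : G // g ≠ 1} := ⟨x₂, ne_one h₂₃⟩
  let v₃ : {g : G // g ≠ 1} := ⟨x₃, ne_one h₃₄⟩
  let v₄ : {g : G // g ≠ 1} := ⟨x₄, ne_one h₄₁⟩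
  have ne_of_coprime {u w : {g : G // g ≠ 1}}
      (h : Nat.Coprime (orderOf (u : G)) (orderOf (w : G))) : u ≠ w := by
    rintro rfl
    exact u.2 (orderOf_eq_one_iff.mp ((Nat.coprime_self _).mp h))
  have ne_of_coprime_not_coprime {u w z : {g : G // g ≠ 1}}
      (h : Nat.Coprime (orderOf (u : G)) (orderOf (z : G)))
      (h' : ¬ Nat.Coprime (orderOf (w : G)) (orderOf (z : G))) : u ≠ w := by
    rintro rfl
    exact h' h
  intro hΓ
  rcases hΓ.adj_or_adj_of_cycle (a := v₁) (b := v₂) (c := v₃) (d := v₄)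
    (top_adj_iff.mpr ⟨ne_of_coprime_not_coprime (z := v₃) h₁₃ h₂₃, h₁₂⟩)
    (top_adj_iff.mpr ⟨ne_of_coprime_not_coprime (z := v₄) h₂₄ h₃₄, h₂₃⟩)
    (top_adj_iff.mpr ⟨ne_of_coprime_not_coprime (z := v₁) h₁₃.symm h₄₁, h₃₄⟩)
    (top_adj_iff.mpr ⟨ne_of_coprime_not_coprime (z := v₂) h₂₄.symm h₁₂, h₄₁⟩)
    (ne_of_coprime h₁₃) (ne_of_coprime h₂₄) with h | h
  · exact h.2.1 h₁₃
  · exact h.2.1 h₂₄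

theorem not_isChordal_top [Finite G] [IsCyclic G] (hG : 4 ≤ (Nat.card G).primeFactors.card) :
    ¬ (genNonCoprimeGraph G ⊤).IsChordal := by
  obtain ⟨s, hs, hs4⟩ := Finset.exists_subset_card_eq hG
  obtain ⟨p, q, r, t, hpq, hpr, hpt, hqr, hqt, hrt, rfl⟩ := Finset.card_eq_four.mp hs4
  simp only [Finset.insert_subset_iff, Finset.singleton_subset_iff] at hs
  obtain ⟨hp, hq, hr, ht⟩ := hs
  have cop {a b : ℕ} (ha : a ∈ (Nat.card G).primeFactors) (hb : b ∈ (Nat.card G).primeFactors)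
      (hab : a ≠ b) : Nat.Coprime a b :=
    (Nat.coprime_primes (Nat.prime_of_mem_primeFactors ha)
      (Nat.prime_of_mem_primeFactors hb)).mpr hab
  have not_cop {a b c : ℕ} (hb : b ∈ (Nat.card G).primeFactors) :
      ¬ Nat.Coprime (a * b) (b * c) :=
    Nat.Prime.not_coprime_iff_dvd.mpr
      ⟨b, Nat.prime_of_mem_primeFactors hb, dvd_mul_left b a, dvd_mul_right b c⟩
  have exists_orderOf {a b : ℕ} (ha : a ∈ (Nat.card G).primeFactors)
      (hb : b ∈ (Nat.card G).primeFactors) (hab : a ≠ b) : ∃ x : G, orderOf x = a * b :=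
    IsCyclic.exists_orderOf_eq_of_dvd ((cop ha hb hab).mul_dvd_of_dvd_of_dvd
      (Nat.dvd_of_mem_primeFactors ha) (Nat.dvd_of_mem_primeFactors hb))
  obtain ⟨x₁, hx₁⟩ := exists_orderOf hp hq hpq
  obtain ⟨x₂, hx₂⟩ := exists_orderOf hq hr hqr
  obtain ⟨x₃, hx₃⟩ := exists_orderOf hr ht hrt
  obtain ⟨x₄, hx₄⟩ := exists_orderOf ht hp hpt.symm
  refine not_isChordal_top_of_orderOf (x₁ := x₁) (x₂ := x₂) (x₃ := x₃) (x₄ := x₄) ?_ ?_ ?_ ?_ ?_ ?_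
    <;> simp only [hx₁, hx₂, hx₃, hx₄]
  · exact not_cop hq
  · exact not_cop hr
  · exact not_cop ht
  · exact not_cop hp
  · exact .mul_left ((cop hp hr hpr).mul_right (cop hp ht hpt))
      ((cop hq hr hqr).mul_right (cop hq ht hqt))
  · exact .mul_left ((cop hq ht hqt).mul_right (cop hq hp hpq.symm))
      ((cop hr ht hrt).mul_right (cop hr hp hpr.symm))

theorem not_isChordal_of_ne_top [Finite G] [IsCyclic G] (hH : H ≠ ⊤) {p q : ℕ} (hp : p.Prime)
    (hq : q.Prime) (hpq : p ≠ q) (hpH : p ∣ Nat.card H) (hqH : q ∣ Nat.card H) :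
    ¬ (genNonCoprimeGraph G H).IsChordal := by
  have exists_mem_orderOf {r : ℕ} (hr : r.Prime) (hrH : r ∣ Nat.card H) :
      ∃ c : {g : G // g ≠ 1}, (c : G) ∈ H ∧ orderOf (c : G) = r := by
    have := Fact.mk hr
    obtain ⟨c, hc⟩ := exists_prime_orderOf_dvd_card' r hrH
    rw [← Subgroup.orderOf_coe] at hc
    exact ⟨⟨c, fun h => hr.ne_one (by rw [← hc, h, orderOf_one])⟩, c.2, hc⟩
  obtain ⟨a, haH, ha⟩ := exists_mem_orderOf hp hpH
  obtain ⟨b, hbH, hb⟩ := exists_mem_orderOf hq hqH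
  obtain ⟨g, hg⟩ := IsCyclic.exists_generator (α := G)
  have hgH : g ∉ H := fun h => hH (eq_top_iff.mpr fun x _ => Subgroup.zpowers_le.mpr h (hg x))
  have hg'H : g⁻¹ ∉ H := fun h => hgH (inv_mem_iff.mp h)
  have hgo : orderOf g = Nat.card G := orderOf_eq_card_of_forall_mem_zpowers hg
  have hpg : p ∣ orderOf g := hgo ▸ hpH.trans (Subgroup.card_subgroup_dvd_card H)
  have hqg : q ∣ orderOf g := hgo ▸ hqH.trans (Subgroup.card_subgroup_dvd_card H)
  let x : {g : G // g ≠ 1} := ⟨g, fun h => hgH (h ▸ H.one_mem)⟩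
  let y : {g : G // g ≠ 1} := ⟨g⁻¹, fun h => hg'H (h ▸ H.one_mem)⟩
  have ne_of_mem {u w : {g : G // g ≠ 1}} (hu : (u : G) ∈ H) (hw : (w : G) ∉ H) : u ≠ w := by
    rintro rfl
    exact hw hu
  have hxy : x ≠ y := by
    intro h
    have h2 : orderOf g ∣ 2 := orderOf_dvd_of_pow_eq_one <| by
      rw [sq]
      exact mul_eq_one_iff_eq_inv.mpr (congrArg Subtype.val h)
    exact hpq (((Nat.prime_dvd_prime_iff_eq hp Nat.prime_two).mp (hpg.trans h2)).trans
      ((Nat.prime_dvd_prime_iff_eq hq Nat.prime_two).mp (hqg.trans h2)).symm)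
  have hab : a ≠ b := by
    rintro rfl
    exact hpq (ha.symm.trans hb)
  intro hΓ
  rcases hΓ.adj_or_adj_of_cycle (a := a) (b := x) (c := b) (d := y)
    (adj_of_prime_dvd (ne_of_mem haH hgH) (.inl haH) hp ha.symm.dvd hpg)
    (adj_of_prime_dvd (ne_of_mem hbH hgH).symm (.inr hbH) hq hqg hb.symm.dvd)
    (adj_of_prime_dvd (ne_of_mem hbH hg'H) (.inl hbH) hq hb.symm.dvd (orderOf_inv g ▸ hqg))
    (adj_of_prime_dvd (ne_of_mem haH hg'H).symm (.inr haH) hp (orderOf_inv g ▸ hpg) ha.symm.dvd)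
    hab hxy with h | h
  · exact h.2.1 (ha ▸ hb ▸ (Nat.coprime_primes hp hq).mpr hpq)
  · exact h.2.2.elim hgH hg'H

end genNonCoprimeGraph

theorem chordal_iff_general {G : Type*} [Group G] [Fintype G]
    (hG : IsCyclic G)
    (H : Subgroup G) :
    (∀ (v : {g : G // g ≠ 1}) (w : (genNonCoprimeGraph G H).Walk v v),
        w.IsCycle → 4 ≤ w.length →
        ∃ x ∈ w.support, ∃ y ∈ w.support,
          (genNonCoprimeGraph G H).Adj x y ∧ s(x, y) ∉ w.edges) ↔
      (∃ p : ℕ, p.Prime ∧ IsPGroup p H) ∨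
      (H = ⊤ ∧ (Fintype.card G).primeFactors.card ≤ 3) := by
  rw [← Nat.card_eq_fintype_card]
  change (genNonCoprimeGraph G H).IsChordal ↔ _
  constructor
  · intro hΓ
    by_contra! h
    obtain ⟨hnotP, hcard⟩ := h
    by_cases hH : H = ⊤
    · subst hH
      exact genNonCoprimeGraph.not_isChordal_top (hcard rfl) hΓ
    · obtain ⟨p, q, hp, hq, hpq, hpH, hqH⟩ := exists_prime_ne_dvd_natCard_of_not_isPGroup hnotP
      exact genNonCoprimeGraph.not_isChordal_of_ne_top hH hp hq hpq hpH hqH hΓ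
  · rintro (⟨p, hp, hH⟩ | ⟨rfl, hcard⟩)
    · exact genNonCoprimeGraph.isChordal_of_isPGroup hp hH
    · exact genNonCoprimeGraph.isChordal_top hcard

theorem chordal_iff {G : Type*} [Group G] [Fintype G]
    (hG : IsCyclic G) (hn : 5 ≤ Fintype.card G)
    (H : Subgroup G) (hH : H ≠ ⊥) :
    (∀ (v : {g : G // g ≠ 1}) (w : (genNonCoprimeGraph G H).Walk v v),
        w.IsCycle → 4 ≤ w.length →
        ∃ x ∈ w.support, ∃ y ∈ w.support,
          (genNonCoprimeGraph G H).Adj x y ∧ s(x, y) ∉ w.edges) ↔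
      (∃ p : ℕ, p.Prime ∧ IsPGroup p H) ∨
      (H = ⊤ ∧ (Fintype.card G).primeFactors.card ≤ 3) :=
  chordal_iff_general hG H
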